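/- Let T, U, V, W₁, W₂, Y₁, Y₂ be random variables on a common probability space taking values in finite sets, satisfying the equalities: I(U;Y₁|W₁) = I(U;Y₁|(T,W₁)) = I(U;Y₁|(T,V,W₁)); I(V;Y₂|W₂) = I(V;Y₂|(T,W₂)) = I(V;Y₂|(T,U,W₂)); I(W₂;Y₁|(T,W₁)) = I(W₁;Y₂|(T,W₂)); I(W₂;Y₁|(T,U,W₁)) = I(W₁;Y₂|(T,U,W₂)); and I(W₂;Y₁|(T,V,W₁)) = I(W₁;Y₂|(T,V,W₂)). Then for any real numbers R₀, R₁, R₂ with R₀ ≤ min{I(T;Y₁|W₁), I(T;Y₂|W₂)}, R₁ ≤ I(U;Y₁|W₁), and R₂ ≤ I(V;Y₂|W₂), the following hold: R₀ + R₁ ≤ I((T,U);Y₁|W₁); R₀ + R₁ ≤ I(U;Y₁|(T,W₁,W₂)) + I((T,W₁);Y₂|W₂); R₀ + R₂ ≤ I((T,V);Y₂|W₂); R₀ + R₂ ≤ I(V;Y₂|(T,W₁,W₂)) + I((T,W₂);Y₁|W₁); R₀ + R₁ + R₂ ≤ I(U;Y₁|(T,V,W₁,W₂)) + I((T,V,W₁);Y₂|W₂);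 R₀ + R₁ + R₂ ≤ I(V;Y₂|(T,U,W₁,W₂)) + I((T,U,W₂);Y₁|W₁); R₀ + R₁ + R₂ ≤ I(U;Y₁|(T,V,W₁,W₂)) + I((T,W₁,W₂);Y₁) + I(V;Y₂|(T,W₁,W₂)); and R₀ + R₁ + R₂ ≤ I(V;Y₂|(T,U,W₁,W₂)) + I((T,W₁,W₂);Y₂) + I(U;Y₁|(T,W₁,W₂)). -/

import Mathlib

open MeasureTheory Real

/-- Shannon entropy (in nats) of a random variable taking values in a finite set. -/
noncomputable def entropy {Ω : Type*} [MeasurableSpace Ω] (μ : Measure Ω)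
    {S : Type*} [Fintype S] (X : Ω → S) : ℝ :=
  ∑ x : S, Real.negMulLog (μ (X ⁻¹' {x})).toReal

/-- Mutual information `I(X;Y) = H(X) + H(Y) - H(X,Y)`. -/
noncomputable def mutualInfo {Ω : Type*} [MeasurableSpace Ω] (μ : Measure Ω)
    {S T : Type*} [Fintype S] [Fintype T] (X : Ω → S) (Y : Ω → T) : ℝ :=
  entropy μ X + entropy μ Y - entropy μ (fun ω => (X ω, Y ω))

/-- Conditional mutual information `I(X;Y|Z) = H(X,Z) + H(Y,Z) - H(X,Y,Z) - H(Z)`. -/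
noncomputable def condMutualInfo {Ω : Type*} [MeasurableSpace Ω] (μ : Measure Ω)
    {S T R : Type*} [Fintype S] [Fintype T] [Fintype R]
    (X : Ω → S) (Y : Ω → T) (Z : Ω → R) : ℝ :=
  entropy μ (fun ω => (X ω, Z ω)) + entropy μ (fun ω => (Y ω, Z ω))
    - entropy μ (fun ω => (X ω, Y ω, Z ω)) - entropy μ Z

/-! Every inequality is a linear combination of the chain rule
`I((A,B);Y|Z) = I(A;Y|Z) + I(B;Y|(A,Z))`, of its consequence
`I(A;Y|Z) + I(B;Y|(A,Z)) = I(B;Y|Z) + I(A;Y|(B,Z))`, and of the nonnegativity of conditional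
mutual information. The first hypotheses let `T` and the other message `V` (resp. `U`) enter the
conditioning of `I(U;Y₁|W₁)` (resp. `I(V;Y₂|W₂)`) for free; the cross equalities make what `W₂`
tells `Y₁` cancel against what `W₁` tells `Y₂`. Nonnegativity is Gibbs' inequality
`log x ≥ 1 - 1/x`, summed over the cells of `(X,Y,Z)`. An entropy depends on a random variable
only through the partition of `Ω` it induces (its `Setoid.ker`); this identifies tuples of the
same variables taken in different orders. -/

noncomputable def probMass {Ω S : Type*} [MeasurableSpace Ω] (μ : Measure Ω) (X : Ω → S)
    (s : S) : ℝ :=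
  μ.real (X ⁻¹' {s})

section

variable {Ω : Type*} [MeasurableSpace Ω] (μ : Measure Ω)

theorem entropy_eq_sum_probMass {S : Type*} [Fintype S] (X : Ω → S) :
    entropy μ X = ∑ s, negMulLog (probMass μ X s) :=
  rfl

theorem exists_eq_of_negMulLog_probMass_ne_zero {S : Type*} {X : Ω → S} {s : S}
    (hs : negMulLog (probMass μ X s) ≠ 0) : ∃ ω, X ω = s := by
  by_contra! hX
  rw [probMass, show X ⁻¹' {s} = ∅ from Set.eq_empty_of_forall_notMem fun ω hω => hX ω hω] at hs
  simp at hs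

theorem Setoid.ker_eq_ker_iff {α β γ : Type*} {f : α → β} {g : α → γ} :
    Setoid.ker f = Setoid.ker g ↔ ∀ a b, f a = f b ↔ g a = g b := by
  simp only [Setoid.ext_iff, Setoid.ker_def]

theorem Setoid.ker_prodMk_congr {α β β' γ γ' : Type*} {f : α → β} {f' : α → β'} {g : α → γ}
    {g' : α → γ'} (hf : Setoid.ker f = Setoid.ker f') (hg : Setoid.ker g = Setoid.ker g') :
    Setoid.ker (fun a => (f a, g a)) = Setoid.ker (fun a => (f' a, g' a)) := by
  rw [Setoid.ker_eq_ker_iff] at *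
  intro a b
  simp only [Prod.mk.injEq, hf a b, hg a b]

theorem Setoid.ker_prodMk_comm {α β γ : Type*} (f : α → β) (g : α → γ) :
    Setoid.ker (fun a => (f a, g a)) = Setoid.ker (fun a => (g a, f a)) :=
  Setoid.ker_eq_ker_iff.mpr fun _ _ => by simp only [Prod.mk.injEq, and_comm]

theorem entropy_congr {S S' : Type*} [Fintype S] [Fintype S'] {X : Ω → S} {X' : Ω → S'}
    (h : Setoid.ker X = Setoid.ker X') : entropy μ X = entropy μ X' := by
  rw [Setoid.ker_eq_ker_iff] at h
  have hfiber (ω : Ω) : probMass μ X (X ω) = probMass μ X' (X' ω) := by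
    rw [probMass, probMass, show X ⁻¹' {X ω} = X' ⁻¹' {X' ω} from Set.ext fun ω' => h ω' ω]
  rw [entropy_eq_sum_probMass, entropy_eq_sum_probMass]
  choose ω₀ hω₀ using fun s (hs : negMulLog (probMass μ X s) ≠ 0) =>
    exists_eq_of_negMulLog_probMass_ne_zero μ hs
  refine Finset.sum_bij_ne_zero (fun s _ hs => X' (ω₀ s hs)) (fun _ _ _ => Finset.mem_univ _)
    (fun s₁ _ hs₁ s₂ _ hs₂ heq => ?_) (fun s' _ hs' => ?_) (fun s _ hs => ?_)
  · rw [← hω₀ s₁ hs₁, ← hω₀ s₂ hs₂]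
    exact (h _ _).mpr heq
  · obtain ⟨ω, rfl⟩ := exists_eq_of_negMulLog_probMass_ne_zero μ hs'
    have hs : negMulLog (probMass μ X (X ω)) ≠ 0 := by rwa [hfiber]
    exact ⟨X ω, Finset.mem_univ _, hs, (h _ _).mp (hω₀ _ hs)⟩
  · rw [← hfiber, hω₀]

theorem condMutualInfo_congr {S S' T T' R R' : Type*} [Fintype S] [Fintype S'] [Fintype T]
    [Fintype T'] [Fintype R] [Fintype R'] {X : Ω → S} {X' : Ω → S'} {Y : Ω → T} {Y' : Ω → T'}
    {Z : Ω → R} {Z' : Ω → R'} (hX : Setoid.ker X = Setoid.ker X')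
    (hY : Setoid.ker Y = Setoid.ker Y') (hZ : Setoid.ker Z = Setoid.ker Z') :
    condMutualInfo μ X Y Z = condMutualInfo μ X' Y' Z' := by
  rw [condMutualInfo, condMutualInfo, entropy_congr μ (Setoid.ker_prodMk_congr hX hZ),
    entropy_congr μ (Setoid.ker_prodMk_congr hY hZ),
    entropy_congr μ (Setoid.ker_prodMk_congr hX (Setoid.ker_prodMk_congr hY hZ)),
    entropy_congr μ hZ]

-- Gibbs' inequality for a single term of `I(X;Y|Z)`: `p`, `a`, `b`, `c` are the masses of the
-- cells of `(X,Y,Z)`, `(X,Z)`, `(Y,Z)` and `Z` through one point.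
theorem sub_mul_div_le_mul_log {p a b c : ℝ} (hp : 0 ≤ p) (hpa : p ≤ a) (hpb : p ≤ b)
    (hac : a ≤ c) : p - a * b / c ≤ p * (log p + log c - log a - log b) := by
  obtain rfl | hp := hp.eq_or_lt
  · simpa using div_nonneg (mul_nonneg hpa hpb) (hpa.trans hac)
  have ha : 0 < a := hp.trans_le hpa
  have hb : 0 < b := hp.trans_le hpb
  have hc : 0 < c := ha.trans_le hac
  have key := Real.one_sub_inv_le_log_of_pos (x := p * c / (a * b)) (by positivity)
  rw [Real.log_div (by positivity) (by positivity), Real.log_mul hp.ne' hc.ne',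
    Real.log_mul ha.ne' hb.ne', inv_div] at key
  calc p - a * b / c = p * (1 - a * b / (p * c)) := by field_simp
    _ ≤ p * (log p + log c - log a - log b) := by
      rw [mul_le_mul_iff_right₀ hp]; linarith

section Distribution

variable [IsFiniteMeasure μ] {α β : Type*} [Fintype α] [MeasurableSpace α]
  [MeasurableSingletonClass α] {F : Ω → α}

theorem probMass_le_probMass_comp {S : Type*} (X : Ω → S) (g : S → β) (s : S) :
    probMass μ X s ≤ probMass μ (fun ω => g (X ω)) (g s) :=
  measureReal_mono fun ω (hω : X ω = s) => congrArg g hω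

theorem probMass_comp_eq_sum [DecidableEq β] (hF : Measurable F) (g : α → β) (b : β) :
    probMass μ (fun ω => g (F ω)) b = ∑ a with g a = b, probMass μ F a := by
  simp only [probMass]
  rw [sum_measureReal_preimage_singleton _ fun a _ => hF (measurableSet_singleton a)]
  congr 1
  ext ω
  simp

theorem entropy_comp_eq_sum [Fintype β] (hF : Measurable F) (g : α → β) :
    entropy μ (fun ω => g (F ω))
      = -∑ a, probMass μ F a * log (probMass μ (fun ω => g (F ω)) (g a)) := by
  classical
  rw [entropy_eq_sum_probMass, ← Finset.sum_fiberwise Finset.univ g, ← Finset.sum_neg_distrib]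
  refine Finset.sum_congr rfl fun b _ => ?_
  rw [Finset.sum_congr rfl fun a ha => by rw [(Finset.mem_filter.mp ha).2], ← Finset.sum_mul,
    ← probMass_comp_eq_sum μ hF g b, negMulLog]
  ring

theorem sum_probMass_prodMk {S R : Type*} [Fintype S] [MeasurableSpace S]
    [MeasurableSingletonClass S] [Fintype R] [MeasurableSpace R] [MeasurableSingletonClass R]
    {X : Ω → S} {Z : Ω → R} (hX : Measurable X) (hZ : Measurable Z) (r : R) :
    ∑ s, probMass μ (fun ω => (X ω, Z ω)) (s, r) = probMass μ Z r := by
  classical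
  rw [(probMass_comp_eq_sum μ (hX.prodMk hZ) Prod.snd r : probMass μ Z r = _), Finset.sum_filter,
    Fintype.sum_prod_type]
  simp

end Distribution

theorem sum_probMass_eq_one [IsProbabilityMeasure μ] {α : Type*} [Fintype α] [MeasurableSpace α]
    [MeasurableSingletonClass α] {F : Ω → α} (hF : Measurable F) : ∑ a, probMass μ F a = 1 := by
  simp only [probMass]
  rw [sum_measureReal_preimage_singleton _ fun a _ => hF (measurableSet_singleton a)]
  simp

section Nonneg

variable [IsProbabilityMeasure μ] {S T R : Type*}
  [Fintype S] [MeasurableSpace S] [MeasurableSingletonClass S]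
  [Fintype T] [MeasurableSpace T] [MeasurableSingletonClass T]
  [Fintype R] [MeasurableSpace R] [MeasurableSingletonClass R]
  {X : Ω → S} {Y : Ω → T} {Z : Ω → R}

theorem condMutualInfo_eq_sum_mul_log (hX : Measurable X) (hY : Measurable Y)
    (hZ : Measurable Z) :
    condMutualInfo μ X Y Z
      = ∑ a, probMass μ (fun ω => (X ω, Y ω, Z ω)) a
          * (log (probMass μ (fun ω => (X ω, Y ω, Z ω)) a) + log (probMass μ Z a.2.2)
            - log (probMass μ (fun ω => (X ω, Z ω)) (a.1, a.2.2))
            - log (probMass μ (fun ω => (Y ω, Z ω)) a.2)) := by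
  have hF : Measurable fun ω => (X ω, Y ω, Z ω) := hX.prodMk (hY.prodMk hZ)
  set p := probMass μ fun ω => (X ω, Y ω, Z ω)
  have hHXZ : entropy μ (fun ω => (X ω, Z ω))
      = -∑ a, p a * log (probMass μ (fun ω => (X ω, Z ω)) (a.1, a.2.2)) :=
    entropy_comp_eq_sum μ hF fun a => (a.1, a.2.2)
  have hHYZ : entropy μ (fun ω => (Y ω, Z ω))
      = -∑ a, p a * log (probMass μ (fun ω => (Y ω, Z ω)) a.2) :=
    entropy_comp_eq_sum μ hF Prod.snd
  have hHXYZ : entropy μ (fun ω => (X ω, Y ω, Z ω)) = -∑ a, p a * log (p a) :=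
    entropy_comp_eq_sum μ hF id
  have hHZ : entropy μ Z = -∑ a, p a * log (probMass μ Z a.2.2) :=
    entropy_comp_eq_sum μ hF fun a => a.2.2
  rw [condMutualInfo, hHXZ, hHYZ, hHXYZ, hHZ]
  simp only [mul_add, mul_sub, Finset.sum_add_distrib, Finset.sum_sub_distrib]
  ring

theorem sum_probMass_mul_div_le_one (hX : Measurable X) (hY : Measurable Y) (hZ : Measurable Z) :
    ∑ a : S × T × R, probMass μ (fun ω => (X ω, Z ω)) (a.1, a.2.2)
      * probMass μ (fun ω => (Y ω, Z ω)) a.2 / probMass μ Z a.2.2 ≤ 1 := by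
  set A := probMass μ fun ω => (X ω, Z ω)
  set B := probMass μ fun ω => (Y ω, Z ω)
  set C := probMass μ Z
  calc ∑ a : S × T × R, A (a.1, a.2.2) * B a.2 / C a.2.2
      = ∑ y : T × R, (∑ s, A (s, y.2)) * B y / C y.2 := by
        rw [Fintype.sum_prod_type, Finset.sum_comm]
        simp only [Finset.sum_mul, Finset.sum_div]
    _ = ∑ y : T × R, C y.2 * B y / C y.2 := by
        simp only [A, C, sum_probMass_prodMk μ hX hZ]
    _ ≤ ∑ y, B y := Finset.sum_le_sum fun y _ => by
        obtain h | h := eq_or_ne (C y.2) 0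
        · rw [h, zero_mul, zero_div]
          exact measureReal_nonneg
        · rw [mul_div_cancel_left₀ _ h]
    _ = 1 := sum_probMass_eq_one μ (hY.prodMk hZ)

theorem condMutualInfo_nonneg (hX : Measurable X) (hY : Measurable Y) (hZ : Measurable Z) :
    0 ≤ condMutualInfo μ X Y Z := by
  set p := probMass μ fun ω => (X ω, Y ω, Z ω)
  set A := probMass μ fun ω => (X ω, Z ω)
  set B := probMass μ fun ω => (Y ω, Z ω)
  set C := probMass μ Z
  calc 0 ≤ 1 - ∑ a : S × T × R, A (a.1, a.2.2) * B a.2 / C a.2.2 :=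
        sub_nonneg.mpr (sum_probMass_mul_div_le_one μ hX hY hZ)
    _ = ∑ a, (p a - A (a.1, a.2.2) * B a.2 / C a.2.2) := by
        rw [Finset.sum_sub_distrib, sum_probMass_eq_one μ (hX.prodMk (hY.prodMk hZ))]
    _ ≤ ∑ a, p a * (log (p a) + log (C a.2.2) - log (A (a.1, a.2.2)) - log (B a.2)) :=
        Finset.sum_le_sum fun a _ => sub_mul_div_le_mul_log measureReal_nonneg
          (probMass_le_probMass_comp μ _ (fun a => (a.1, a.2.2)) a)
          (probMass_le_probMass_comp μ _ Prod.snd a)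
          (probMass_le_probMass_comp μ _ Prod.snd (a.1, a.2.2))
    _ = condMutualInfo μ X Y Z := (condMutualInfo_eq_sum_mul_log μ hX hY hZ).symm

end Nonneg

section Identities

variable {SA SB T R : Type*} [Fintype SA] [Fintype SB] [Fintype T] [Fintype R]

theorem condMutualInfo_prod_left (A : Ω → SA) (B : Ω → SB) (Y : Ω → T) (Z : Ω → R) :
    condMutualInfo μ (fun ω => (A ω, B ω)) Y Z
      = condMutualInfo μ A Y Z + condMutualInfo μ B Y (fun ω => (A ω, Z ω)) := by
  have h₁ : entropy μ (fun ω => (B ω, A ω, Z ω)) = entropy μ (fun ω => ((A ω, B ω), Z ω)) :=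
    entropy_congr μ (Setoid.ker_eq_ker_iff.mpr fun _ _ => by simp only [Prod.mk.injEq]; tauto)
  have h₂ : entropy μ (fun ω => (Y ω, A ω, Z ω)) = entropy μ (fun ω => (A ω, Y ω, Z ω)) :=
    entropy_congr μ (Setoid.ker_eq_ker_iff.mpr fun _ _ => by simp only [Prod.mk.injEq]; tauto)
  have h₃ : entropy μ (fun ω => (B ω, Y ω, A ω, Z ω))
      = entropy μ (fun ω => ((A ω, B ω), Y ω, Z ω)) :=
    entropy_congr μ (Setoid.ker_eq_ker_iff.mpr fun _ _ => by simp only [Prod.mk.injEq]; tauto)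
  rw [condMutualInfo, condMutualInfo, condMutualInfo, h₁, h₂, h₃]
  ring

theorem condMutualInfo_add_condMutualInfo_comm (A : Ω → SA) (B : Ω → SB) (Y : Ω → T)
    (Z : Ω → R) :
    condMutualInfo μ A Y Z + condMutualInfo μ B Y (fun ω => (A ω, Z ω))
      = condMutualInfo μ B Y Z + condMutualInfo μ A Y (fun ω => (B ω, Z ω)) := by
  rw [← condMutualInfo_prod_left, ← condMutualInfo_prod_left]
  exact condMutualInfo_congr μ (Setoid.ker_prodMk_comm A B) rfl rfl

theorem mutualInfo_congr {S S' : Type*} [Fintype S] [Fintype S'] {X : Ω → S} {X' : Ω → S'}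
    {Y : Ω → T} (hX : Setoid.ker X = Setoid.ker X') : mutualInfo μ X Y = mutualInfo μ X' Y := by
  rw [mutualInfo, mutualInfo, entropy_congr μ hX, entropy_congr μ (Setoid.ker_prodMk_congr hX rfl)]

theorem mutualInfo_prod_left (A : Ω → SA) (B : Ω → SB) (Y : Ω → T) :
    mutualInfo μ (fun ω => (A ω, B ω)) Y = mutualInfo μ A Y + condMutualInfo μ B Y A := by
  have h₁ := entropy_congr μ (Setoid.ker_prodMk_comm B A)
  have h₂ := entropy_congr μ (Setoid.ker_prodMk_comm Y A)
  have h₃ : entropy μ (fun ω => (B ω, Y ω, A ω)) = entropy μ (fun ω => ((A ω, B ω), Y ω)) :=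
    entropy_congr μ (Setoid.ker_eq_ker_iff.mpr fun _ _ => by simp only [Prod.mk.injEq]; tauto)
  rw [mutualInfo, mutualInfo, condMutualInfo, h₁, h₂, h₃]
  ring

theorem mutualInfo_eq_condMutualInfo_const [IsProbabilityMeasure μ] {S : Type*} [Fintype S]
    (X : Ω → S) (Y : Ω → T) : mutualInfo μ X Y = condMutualInfo μ X Y (fun _ => ()) := by
  have hconst : entropy μ (fun _ : Ω => ()) = 0 := by simp [entropy]
  rw [mutualInfo, condMutualInfo, hconst,
    entropy_congr μ (X := fun ω => (X ω, ())) (X' := X) (by simp [Setoid.ker_eq_ker_iff]),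
    entropy_congr μ (X := fun ω => (Y ω, ())) (X' := Y) (by simp [Setoid.ker_eq_ker_iff]),
    entropy_congr μ (X := fun ω => (X ω, Y ω, ())) (X' := fun ω => (X ω, Y ω))
      (by simp [Setoid.ker_eq_ker_iff])]
  ring

end Identities

section Inequalities

variable [IsProbabilityMeasure μ]

theorem mutualInfo_nonneg {S T : Type*} [Fintype S] [MeasurableSpace S]
    [MeasurableSingletonClass S] [Fintype T] [MeasurableSpace T] [MeasurableSingletonClass T]
    {X : Ω → S} {Y : Ω → T} (hX : Measurable X) (hY : Measurable Y) : 0 ≤ mutualInfo μ X Y :=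
  mutualInfo_eq_condMutualInfo_const μ X Y ▸ condMutualInfo_nonneg μ hX hY measurable_const

theorem condMutualInfo_le_add_condMutualInfo_of_ker_eq {SU SW T R R' : Type*}
    [Fintype SU] [MeasurableSpace SU] [MeasurableSingletonClass SU]
    [Fintype SW] [MeasurableSpace SW] [MeasurableSingletonClass SW]
    [Fintype T] [MeasurableSpace T] [MeasurableSingletonClass T]
    [Fintype R] [MeasurableSpace R] [MeasurableSingletonClass R] [Fintype R']
    {U : Ω → SU} {W : Ω → SW} {Y : Ω → T} {Z : Ω → R} {Z' : Ω → R'}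
    (hU : Measurable U) (hW : Measurable W) (hY : Measurable Y) (hZ : Measurable Z)
    (hZ' : Setoid.ker Z' = Setoid.ker fun ω => (W ω, Z ω)) :
    condMutualInfo μ U Y Z ≤ condMutualInfo μ W Y Z + condMutualInfo μ U Y Z' := by
  rw [condMutualInfo_congr μ rfl rfl hZ']
  linarith [condMutualInfo_add_condMutualInfo_comm μ U W Y Z,
    condMutualInfo_nonneg μ hW hY (hU.prodMk hZ)]

variable {ST SU SV SW SW' SY SY' R R' : Type*}
  [Fintype ST] [MeasurableSpace ST] [MeasurableSingletonClass ST]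
  [Fintype SU] [MeasurableSpace SU] [MeasurableSingletonClass SU]
  [Fintype SV] [MeasurableSpace SV] [MeasurableSingletonClass SV]
  [Fintype SW] [MeasurableSpace SW] [MeasurableSingletonClass SW]
  [Fintype SW'] [MeasurableSpace SW'] [MeasurableSingletonClass SW']
  [Fintype SY] [MeasurableSpace SY] [MeasurableSingletonClass SY]
  [Fintype SY'] [Fintype R] [Fintype R']
  {T : Ω → ST} {U : Ω → SU} {V : Ω → SV} {W : Ω → SW} {W' : Ω → SW'} {Y : Ω → SY}
  {Y' : Ω → SY'} {Z : Ω → R} {Z' : Ω → R'}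

theorem add_condMutualInfo_le_of_cross_eq (hT : Measurable T) (hU : Measurable U)
    (hW : Measurable W) (hW' : Measurable W') (hY : Measurable Y)
    (hUT : condMutualInfo μ U Y W = condMutualInfo μ U Y (fun ω => (T ω, W ω)))
    (hcross : condMutualInfo μ W' Y (fun ω => (T ω, W ω))
      = condMutualInfo μ W Y' (fun ω => (T ω, W' ω)))
    (hZ : Setoid.ker Z = Setoid.ker fun ω => (T ω, W ω, W' ω)) :
    condMutualInfo μ T Y' W' + condMutualInfo μ U Y W
      ≤ condMutualInfo μ U Y Z + condMutualInfo μ (fun ω => (T ω, W ω)) Y' W' := by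
  replace hZ : Setoid.ker Z = Setoid.ker fun ω => (W' ω, T ω, W ω) :=
    hZ.trans (Setoid.ker_eq_ker_iff.mpr fun _ _ => by simp only [Prod.mk.injEq]; tauto)
  linarith [condMutualInfo_prod_left μ T W Y' W',
    condMutualInfo_le_add_condMutualInfo_of_ker_eq μ hU hW' hY (hT.prodMk hW) hZ]

theorem add_add_condMutualInfo_le_of_cross_eq (hT : Measurable T) (hU : Measurable U)
    (hV : Measurable V) (hW : Measurable W) (hW' : Measurable W') (hY : Measurable Y)
    (hUTV : condMutualInfo μ U Y W = condMutualInfo μ U Y (fun ω => (T ω, V ω, W ω)))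
    (hVT : condMutualInfo μ V Y' W' = condMutualInfo μ V Y' (fun ω => (T ω, W' ω)))
    (hcross : condMutualInfo μ W' Y (fun ω => (T ω, V ω, W ω))
      = condMutualInfo μ W Y' (fun ω => (T ω, V ω, W' ω)))
    (hZ : Setoid.ker Z = Setoid.ker fun ω => (T ω, V ω, W ω, W' ω)) :
    condMutualInfo μ T Y' W' + condMutualInfo μ U Y W + condMutualInfo μ V Y' W'
      ≤ condMutualInfo μ U Y Z + condMutualInfo μ (fun ω => (T ω, V ω, W ω)) Y' W' := by
  replace hZ : Setoid.ker Z = Setoid.ker fun ω => (W' ω, T ω, V ω, W ω) :=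
    hZ.trans (Setoid.ker_eq_ker_iff.mpr fun _ _ => by simp only [Prod.mk.injEq]; tauto)
  have hWY' : condMutualInfo μ W Y' (fun ω => (V ω, T ω, W' ω))
      = condMutualInfo μ W Y' (fun ω => (T ω, V ω, W' ω)) :=
    condMutualInfo_congr μ rfl rfl (Setoid.ker_eq_ker_iff.mpr fun _ _ => by
      simp only [Prod.mk.injEq]; tauto)
  linarith [condMutualInfo_prod_left μ T (fun ω => (V ω, W ω)) Y' W',
    condMutualInfo_prod_left μ V W Y' (fun ω => (T ω, W' ω)),
    condMutualInfo_le_add_condMutualInfo_of_ker_eq μ hU hW' hY (hT.prodMk (hV.prodMk hW)) hZ]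

theorem add_add_condMutualInfo_le_mutualInfo_of_cross_eq (hT : Measurable T) (hU : Measurable U)
    (hV : Measurable V) (hW : Measurable W) (hW' : Measurable W') (hY : Measurable Y)
    (hUTV : condMutualInfo μ U Y W = condMutualInfo μ U Y (fun ω => (T ω, V ω, W ω)))
    (hVT : condMutualInfo μ V Y' W' = condMutualInfo μ V Y' (fun ω => (T ω, W' ω)))
    (hcross : condMutualInfo μ W' Y (fun ω => (T ω, W ω))
      = condMutualInfo μ W Y' (fun ω => (T ω, W' ω)))
    (hcrossV : condMutualInfo μ W' Y (fun ω => (T ω, V ω, W ω))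
      = condMutualInfo μ W Y' (fun ω => (T ω, V ω, W' ω)))
    (hZ : Setoid.ker Z = Setoid.ker fun ω => (T ω, V ω, W ω, W' ω))
    (hZ' : Setoid.ker Z' = Setoid.ker fun ω => (T ω, W ω, W' ω)) :
    condMutualInfo μ T Y W + condMutualInfo μ U Y W + condMutualInfo μ V Y' W'
      ≤ condMutualInfo μ U Y Z + mutualInfo μ Z' Y + condMutualInfo μ V Y' Z' := by
  replace hZ : Setoid.ker Z = Setoid.ker fun ω => (W' ω, T ω, V ω, W ω) :=
    hZ.trans (Setoid.ker_eq_ker_iff.mpr fun _ _ => by simp only [Prod.mk.injEq]; tauto)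
  replace hZ' : Setoid.ker Z' = Setoid.ker fun ω => (W ω, T ω, W' ω) :=
    hZ'.trans (Setoid.ker_eq_ker_iff.mpr fun _ _ => by simp only [Prod.mk.injEq]; tauto)
  have hWY' : condMutualInfo μ W Y' (fun ω => (V ω, T ω, W' ω))
      = condMutualInfo μ W Y' (fun ω => (T ω, V ω, W' ω)) :=
    condMutualInfo_congr μ rfl rfl (Setoid.ker_eq_ker_iff.mpr fun _ _ => by
      simp only [Prod.mk.injEq]; tauto)
  linarith [mutualInfo_congr μ (Y := Y) hZ', mutualInfo_prod_left μ W (fun ω => (T ω, W' ω)) Y,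
    condMutualInfo_prod_left μ T W' Y W, mutualInfo_nonneg μ hW hY,
    condMutualInfo_add_condMutualInfo_comm μ V W Y' (fun ω => (T ω, W' ω)),
    condMutualInfo_congr μ (X := V) (Y := Y') rfl rfl hZ',
    condMutualInfo_le_add_condMutualInfo_of_ker_eq μ hU hW' hY (hT.prodMk (hV.prodMk hW)) hZ]

end Inequalities

end

theorem stmt_15
    {Ω : Type*} [MeasurableSpace Ω] (μ : Measure Ω) [IsProbabilityMeasure μ]
    {ST SU SV SW₁ SW₂ SY₁ SY₂ : Type*}
    [Fintype ST] [MeasurableSpace ST] [MeasurableSingletonClass ST] [Fintype SU] [MeasurableSpace SU] [MeasurableSingletonClass SU] [Fintype SV] [MeasurableSpace SV] [MeasurableSingletonClass SV] [Fintype SW₁] [MeasurableSpace SW₁] [MeasurableSingletonClass SW₁] [Fintype SW₂] [MeasurableSpace SW₂] [MeasurableSingletonClass SW₂] [Fintype SY₁] [MeasurableSpace SY₁] [MeasurableSingletonClass SY₁] [Fintype SY₂] [MeasurableSpace SY₂] [MeasurableSingletonClass SY₂]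
    (T : Ω → ST) (U : Ω → SU) (V : Ω → SV) (W₁ : Ω → SW₁) (W₂ : Ω → SW₂) (Y₁ : Ω → SY₁) (Y₂ : Ω → SY₂)
    (hT : Measurable T) (hU : Measurable U) (hV : Measurable V) (hW₁ : Measurable W₁) (hW₂ : Measurable W₂) (hY₁ : Measurable Y₁) (hY₂ : Measurable Y₂)
    (R₀ R₁ R₂ : ℝ)
    (h0 : condMutualInfo μ U Y₁ W₁ = condMutualInfo μ U Y₁ (fun ω => (T ω, W₁ ω)))
    (h1 : condMutualInfo μ U Y₁ W₁ = condMutualInfo μ U Y₁ (fun ω => (T ω, V ω, W₁ ω)))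
    (h2 : condMutualInfo μ V Y₂ W₂ = condMutualInfo μ V Y₂ (fun ω => (T ω, W₂ ω)))
    (h3 : condMutualInfo μ V Y₂ W₂ = condMutualInfo μ V Y₂ (fun ω => (T ω, U ω, W₂ ω)))
    (h4 : condMutualInfo μ W₂ Y₁ (fun ω => (T ω, W₁ ω)) = condMutualInfo μ W₁ Y₂ (fun ω => (T ω, W₂ ω)))
    (h5 : condMutualInfo μ W₂ Y₁ (fun ω => (T ω, U ω, W₁ ω)) = condMutualInfo μ W₁ Y₂ (fun ω => (T ω, U ω, W₂ ω)))
    (h6 : condMutualInfo μ W₂ Y₁ (fun ω => (T ω, V ω, W₁ ω)) = condMutualInfo μ W₁ Y₂ (fun ω => (T ω, V ω, W₂ ω)))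
    (h7 : R₀ ≤ min (condMutualInfo μ T Y₁ W₁) (condMutualInfo μ T Y₂ W₂))
    (h8 : R₁ ≤ condMutualInfo μ U Y₁ W₁)
    (h9 : R₂ ≤ condMutualInfo μ V Y₂ W₂)
    : R₀ + R₁ ≤ condMutualInfo μ (fun ω => (T ω, U ω)) Y₁ W₁ ∧ R₀ + R₁ ≤ condMutualInfo μ U Y₁ (fun ω => (T ω, W₁ ω, W₂ ω)) + condMutualInfo μ (fun ω => (T ω, W₁ ω)) Y₂ W₂ ∧ R₀ + R₂ ≤ condMutualInfo μ (fun ω => (T ω, V ω)) Y₂ W₂ ∧ R₀ + R₂ ≤ condMutualInfo μ V Y₂ (fun ω => (T ω, W₁ ω, W₂ ω)) + condMutualInfo μ (fun ω => (T ω, W₂ ω)) Y₁ W₁ ∧ R₀ + R₁ + R₂ ≤ condMutualInfo μ U Y₁ (fun ω => (T ω, V ω, W₁ ω, W₂ ω)) + condMutualInfo μ (fun ω => (T ω, V ω, W₁ ω)) Y₂ W₂ ∧ R₀ + R₁ + R₂ ≤ condMutualInfo μ V Y₂ (fun ω => (T ω, U ω, W₁ ω, W₂ ω)) + condMutualInfo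 μ (fun ω => (T ω, U ω, W₂ ω)) Y₁ W₁ ∧ R₀ + R₁ + R₂ ≤ condMutualInfo μ U Y₁ (fun ω => (T ω, V ω, W₁ ω, W₂ ω)) + mutualInfo μ (fun ω => (T ω, W₁ ω, W₂ ω)) Y₁ + condMutualInfo μ V Y₂ (fun ω => (T ω, W₁ ω, W₂ ω)) ∧ R₀ + R₁ + R₂ ≤ condMutualInfo μ V Y₂ (fun ω => (T ω, U ω, W₁ ω, W₂ ω)) + mutualInfo μ (fun ω => (T ω, W₁ ω, W₂ ω)) Y₂ + condMutualInfo μ U Y₁ (fun ω => (T ω, W₁ ω, W₂ ω)) := by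
  obtain ⟨hR₁, hR₂⟩ := le_min_iff.mp h7
  have hswap : Setoid.ker (fun ω => (W₁ ω, W₂ ω)) = Setoid.ker fun ω => (W₂ ω, W₁ ω) :=
    Setoid.ker_prodMk_comm W₁ W₂
  refine ⟨?_, ?_, ?_, ?_, ?_, ?_, ?_, ?_⟩
  · linarith [condMutualInfo_prod_left μ T U Y₁ W₁]
  · exact (add_le_add hR₂ h8).trans
      (add_condMutualInfo_le_of_cross_eq μ hT hU hW₁ hW₂ hY₁ h0 h4 rfl)
  · linarith [condMutualInfo_prod_left μ T V Y₂ W₂]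
  · exact (add_le_add hR₁ h9).trans
      (add_condMutualInfo_le_of_cross_eq μ hT hV hW₂ hW₁ hY₂ h2 h4.symm
        (Setoid.ker_prodMk_congr rfl hswap))
  · exact (add_le_add (add_le_add hR₂ h8) h9).trans
      (add_add_condMutualInfo_le_of_cross_eq μ hT hU hV hW₁ hW₂ hY₁ h1 h2 h6 rfl)
  · rw [add_right_comm]
    exact (add_le_add (add_le_add hR₁ h9) h8).trans
      (add_add_condMutualInfo_le_of_cross_eq μ hT hV hU hW₂ hW₁ hY₂ h3 h0 h5.symm
        (Setoid.ker_prodMk_congr rfl (Setoid.ker_prodMk_congr rfl hswap)))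
  · exact (add_le_add (add_le_add hR₁ h8) h9).trans
      (add_add_condMutualInfo_le_mutualInfo_of_cross_eq μ hT hU hV hW₁ hW₂ hY₁ h1 h2 h4 h6 rfl rfl)
  · rw [add_right_comm]
    exact (add_le_add (add_le_add hR₂ h9) h8).trans
      (add_add_condMutualInfo_le_mutualInfo_of_cross_eq μ hT hV hU hW₂ hW₁ hY₂ h3 h0 h4.symm
        h5.symm (Setoid.ker_prodMk_congr rfl (Setoid.ker_prodMk_congr rfl hswap))
        (Setoid.ker_prodMk_congr rfl hswap))
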